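/- For every integer n ≥ 4, the number of alternating permutations of [n] with exactly ⌈n/2⌉ fixed points equals D_{⌊n/2⌋}, the number of derangements of [⌊n/2⌋]. -/
import Mathlib

/-- `π` is an alternating permutation: `π 1 > π 2 < π 3 > π 4 < ⋯`
(here stated with 0-indexed positions). -/
def IsAlternating {n : ℕ} (π : Equiv.Perm (Fin n)) : Prop :=
  ∀ i : ℕ, ∀ h : i + 1 < n,
    if i % 2 = 0 then π ⟨i + 1, h⟩ < π ⟨i, Nat.lt_of_succ_lt h⟩
    else π ⟨i, Nat.lt_of_succ_lt h⟩ < π ⟨i + 1, h⟩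

/-- `π` is a reverse alternating permutation: `π 1 < π 2 > π 3 < π 4 > ⋯`
(here stated with 0-indexed positions). -/
def IsRevAlternating {n : ℕ} (π : Equiv.Perm (Fin n)) : Prop :=
  ∀ i : ℕ, ∀ h : i + 1 < n,
    if i % 2 = 0 then π ⟨i, Nat.lt_of_succ_lt h⟩ < π ⟨i + 1, h⟩
    else π ⟨i + 1, h⟩ < π ⟨i, Nat.lt_of_succ_lt h⟩

/-- The number of fixed points of a permutation of `Fin n`. -/
def fixedPointCount {n : ℕ} (π : Equiv.Perm (Fin n)) : ℕ :=
  (Finset.univ.filter fun i => π i = i).card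

namespace StanleyAux

/-- The free position (= free value) of pair `j` for derangement `σ`. -/
def fv {m : ℕ} (σ : Equiv.Perm (Fin m)) (j : Fin m) : ℕ :=
  if (j : ℕ) < (σ j : ℕ) then 2 * j else 2 * j + 1

lemma fv_div {m : ℕ} (σ : Equiv.Perm (Fin m)) (j : Fin m) : fv σ j / 2 = j := by
  unfold fv; split <;> omega

lemma fv_lt {m : ℕ} (σ : Equiv.Perm (Fin m)) (j : Fin m) : fv σ j < 2 * m := by
  have := j.isLt; unfold fv; split <;> omega

lemma fv_ge {m : ℕ} (σ : Equiv.Perm (Fin m)) (j : Fin m) : 2 * (j : ℕ) ≤ fv σ j := by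
  unfold fv; split <;> omega

lemma fv_le {m : ℕ} (σ : Equiv.Perm (Fin m)) (j : Fin m) : fv σ j ≤ 2 * (j : ℕ) + 1 := by
  unfold fv; split <;> omega

lemma fv_inj {m : ℕ} (σ : Equiv.Perm (Fin m)) {j j' : Fin m} (h : fv σ j = fv σ j') :
    j = j' := by
  have h1 := fv_div σ j
  have h2 := fv_div σ j'
  exact Fin.ext (by omega)

/-- The underlying function (on `ℕ`) of the alternating permutation built from `σ`. -/
def bF {m : ℕ} (σ : Equiv.Perm (Fin m)) (k : ℕ) : ℕ :=
  if h : k / 2 < m then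
    if fv σ ⟨k / 2, h⟩ = k then fv σ (σ ⟨k / 2, h⟩) else k
  else k

lemma bF_fv {m : ℕ} (σ : Equiv.Perm (Fin m)) (j : Fin m) :
    bF σ (fv σ j) = fv σ (σ j) := by
  have h1 := fv_div σ j
  have hj := j.isLt
  unfold bF
  rw [dif_pos (by omega)]
  have : (⟨fv σ j / 2, by omega⟩ : Fin m) = j := Fin.ext (show fv σ j / 2 = (j:ℕ) from h1)
  rw [this, if_pos rfl]

lemma bF_of_not_free {m : ℕ} (σ : Equiv.Perm (Fin m)) (k : ℕ)
    (hk : ∀ j : Fin m, fv σ j ≠ k) : bF σ k = k := by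
  unfold bF
  split
  · rw [if_neg (hk _)]
  · rfl

lemma fv_unique {m : ℕ} (σ : Equiv.Perm (Fin m)) {j j' : Fin m} {k : ℕ}
    (h : fv σ j' = k) (hk : k / 2 = (j : ℕ)) : j' = j := by
  have := fv_div σ j'
  exact Fin.ext (by omega)

lemma bF_spec {m : ℕ} (σ : Equiv.Perm (Fin m)) (k : ℕ) :
    (∃ j : Fin m, k = fv σ j ∧ bF σ k = fv σ (σ j)) ∨
      ((∀ j : Fin m, fv σ j ≠ k) ∧ bF σ k = k) := by
  by_cases hfree : ∃ j : Fin m, fv σ j = k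
  · obtain ⟨j, hj⟩ := hfree
    exact Or.inl ⟨j, hj.symm, by rw [← hj, bF_fv]⟩
  · push_neg at hfree
    exact Or.inr ⟨hfree, bF_of_not_free σ k hfree⟩

lemma bF_inj {m : ℕ} (σ : Equiv.Perm (Fin m)) : Function.Injective (bF σ) := by
  intro a b h
  rcases bF_spec σ a with ⟨ja, ha, ha'⟩ | ⟨ha, ha'⟩ <;>
    rcases bF_spec σ b with ⟨jb, hb, hb'⟩ | ⟨hb, hb'⟩
  · rw [ha', hb'] at h
    rw [ha, hb, σ.injective (fv_inj σ h)]
  · rw [ha', hb'] at h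
    exact absurd h (hb (σ ja))
  · rw [ha', hb'] at h
    exact absurd h.symm (ha (σ jb))
  · rw [ha', hb'] at h
    exact h

lemma bF_lt {m n : ℕ} (σ : Equiv.Perm (Fin m)) (h1 : 2 * m ≤ n) {k : ℕ} (hk : k < n) :
    bF σ k < n := by
  unfold bF
  split
  · split
    · exact lt_of_lt_of_le (fv_lt σ _) h1
    · exact hk
  · exact hk

/-- The alternating permutation of `Fin n` built from `σ`. -/
noncomputable def mainPerm {m n : ℕ} (σ : Equiv.Perm (Fin m)) (h1 : 2 * m ≤ n) :
    Equiv.Perm (Fin n) :=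
  Equiv.ofBijective (fun k => ⟨bF σ k, bF_lt σ h1 k.isLt⟩)
    ((Finite.injective_iff_bijective).mp (fun a b h => Fin.ext (bF_inj σ (by
      simpa [Fin.ext_iff] using h))))

lemma mainPerm_apply {m n : ℕ} (σ : Equiv.Perm (Fin m)) (h1 : 2 * m ≤ n) (k : Fin n) :
    (mainPerm σ h1 k : ℕ) = bF σ k := rfl

lemma bF_pair {m : ℕ} (σ : Equiv.Perm (Fin m)) (hσ : ∀ i, σ i ≠ i) (j : Fin m) :
    bF σ (2 * (j : ℕ) + 1) < bF σ (2 * (j : ℕ)) ∧ 2 * (j : ℕ) ≤ bF σ (2 * (j : ℕ)) ∧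
      bF σ (2 * (j : ℕ) + 1) ≤ 2 * (j : ℕ) + 1 := by
  have hσj : (σ j : ℕ) ≠ (j : ℕ) := fun h => hσ j (Fin.ext h)
  by_cases hA : (j : ℕ) < (σ j : ℕ)
  · have hfv : fv σ j = 2 * (j : ℕ) := by unfold fv; rw [if_pos hA]
    have h2t : bF σ (2 * (j : ℕ)) = fv σ (σ j) := by rw [← hfv, bF_fv]
    have h2t1 : bF σ (2 * (j : ℕ) + 1) = 2 * (j : ℕ) + 1 := by
      apply bF_of_not_free
      intro j' hj'
      have : j' = j := fv_unique σ hj' (by omega)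
      rw [this, hfv] at hj'
      omega
    have hge := fv_ge σ (σ j)
    omega
  · have hfv : fv σ j = 2 * (j : ℕ) + 1 := by unfold fv; rw [if_neg hA]
    have h2t1 : bF σ (2 * (j : ℕ) + 1) = fv σ (σ j) := by rw [← hfv, bF_fv]
    have h2t : bF σ (2 * (j : ℕ)) = 2 * (j : ℕ) := by
      apply bF_of_not_free
      intro j' hj'
      have : j' = j := fv_unique σ hj' (by omega)
      rw [this, hfv] at hj'
      omega
    have hle := fv_le σ (σ j)
    omega

lemma mainPerm_alternating {m n : ℕ} (σ : Equiv.Perm (Fin m)) (hσ : ∀ i, σ i ≠ i)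
    (h1 : 2 * m ≤ n) (h2 : n ≤ 2 * m + 1) : IsAlternating (mainPerm σ h1) := by
  intro i hi
  rcases Nat.even_or_odd i with ⟨t, hteq⟩ | ⟨t, hteq⟩
  · have ht : t < m := by omega
    have hp := bF_pair σ hσ ⟨t, ht⟩
    have hc : ((⟨t, ht⟩ : Fin m) : ℕ) = t := rfl
    rw [hc] at hp
    have him : i % 2 = 0 := by omega
    rw [if_pos him]
    show (mainPerm σ h1 _ : ℕ) < (mainPerm σ h1 _ : ℕ)
    rw [mainPerm_apply, mainPerm_apply]
    simp only [Fin.val_mk]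
    have e1 : i + 1 = 2 * t + 1 := by omega
    have e2 : i = 2 * t := by omega
    rw [e1, e2]
    exact hp.1
  · have htm : t < m := by omega
    have hp1 := bF_pair σ hσ ⟨t, htm⟩
    have hc1 : ((⟨t, htm⟩ : Fin m) : ℕ) = t := rfl
    rw [hc1] at hp1
    have him : ¬ i % 2 = 0 := by omega
    rw [if_neg him]
    show (mainPerm σ h1 _ : ℕ) < (mainPerm σ h1 _ : ℕ)
    rw [mainPerm_apply, mainPerm_apply]
    simp only [Fin.val_mk]
    have e1 : i = 2 * t + 1 := by omega
    rw [e1]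
    rcases lt_or_ge (t + 1) m with ht | ht
    · have hp2 := bF_pair σ hσ ⟨t + 1, ht⟩
      have hc2 : ((⟨t + 1, ht⟩ : Fin m) : ℕ) = t + 1 := rfl
      rw [hc2] at hp2
      have e2 : 2 * t + 1 + 1 = 2 * (t + 1) := by omega
      rw [e2]
      omega
    · have hlast : bF σ (2 * t + 1 + 1) = 2 * t + 1 + 1 := by
        apply bF_of_not_free
        intro j hj
        have := fv_lt σ j
        omega
      omega


lemma bF_ne_iff {m : ℕ} (σ : Equiv.Perm (Fin m)) (hσ : ∀ i, σ i ≠ i) (k : ℕ) :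
    bF σ k ≠ k ↔ ∃ j : Fin m, fv σ j = k := by
  constructor
  · intro h
    rcases bF_spec σ k with ⟨j, hj, _⟩ | ⟨_, h'⟩
    · exact ⟨j, hj.symm⟩
    · exact absurd h' h
  · rintro ⟨j, rfl⟩
    rw [bF_fv]
    intro h
    exact hσ j (fv_inj σ h)

lemma mainPerm_count {m n : ℕ} (σ : Equiv.Perm (Fin m)) (hσ : ∀ i, σ i ≠ i)
    (h1 : 2 * m ≤ n) : fixedPointCount (mainPerm σ h1) = n - m := by
  classical
  have himg : (Finset.univ.filter fun i : Fin n => ¬ mainPerm σ h1 i = i) =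
      Finset.image (fun j : Fin m => (⟨fv σ j, lt_of_lt_of_le (fv_lt σ j) h1⟩ : Fin n))
        Finset.univ := by
    ext i
    simp only [Finset.mem_filter, Finset.mem_univ, true_and, Finset.mem_image]
    rw [Fin.ext_iff, mainPerm_apply]
    constructor
    · intro hne
      obtain ⟨j, hj⟩ := (bF_ne_iff σ hσ (i : ℕ)).mp hne
      exact ⟨j, Fin.ext hj⟩
    · rintro ⟨j, hj⟩
      exact (bF_ne_iff σ hσ (i : ℕ)).mpr ⟨j, congrArg Fin.val hj⟩
  have hinj : Function.Injective
      (fun j : Fin m => (⟨fv σ j, lt_of_lt_of_le (fv_lt σ j) h1⟩ : Fin n)) := by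
    intro a b hab
    exact fv_inj σ (by simpa [Fin.ext_iff] using hab)
  have hcard : (Finset.univ.filter fun i : Fin n => ¬ mainPerm σ h1 i = i).card = m := by
    rw [himg, Finset.card_image_of_injective _ hinj, Finset.card_univ, Fintype.card_fin]
  have htot := Finset.card_filter_add_card_filter_not
    (s := (Finset.univ : Finset (Fin n))) (p := fun i => mainPerm σ h1 i = i)
  rw [Finset.card_univ, Fintype.card_fin] at htot
  unfold fixedPointCount
  omega

lemma mainPerm_injective {m n : ℕ} (σ σ' : Equiv.Perm (Fin m))
    (hσ : ∀ i, σ i ≠ i) (hσ' : ∀ i, σ' i ≠ i) (h1 : 2 * m ≤ n)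
    (h : mainPerm σ h1 = mainPerm (n := n) σ' h1) : σ = σ' := by
  have hbf : ∀ a : ℕ, a < n → bF σ a = bF σ' a := by
    intro a ha
    exact congrArg Fin.val (DFunLike.congr_fun h ⟨a, ha⟩)
  -- the type of each pair agrees
  have hcond : ∀ τ : Equiv.Perm (Fin m), (∀ i, τ i ≠ i) → ∀ i : Fin m,
      ((i : ℕ) < (τ i : ℕ) ↔ bF τ (2 * (i : ℕ)) ≠ 2 * (i : ℕ)) := by
    intro τ hτ i
    have hτi : (τ i : ℕ) ≠ (i : ℕ) := fun hh => hτ i (Fin.ext hh)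
    constructor
    · intro hlt
      have hfv : fv τ i = 2 * (i : ℕ) := by unfold fv; rw [if_pos hlt]
      rw [← hfv, bF_fv]
      have := fv_ge τ (τ i)
      omega
    · intro hne
      by_contra hge
      apply hne
      apply bF_of_not_free
      intro j' hj'
      have hji : j' = i := fv_unique τ hj' (by omega)
      rw [hji] at hj'
      unfold fv at hj'
      rw [if_neg hge] at hj'
      omega
  have hfveq : ∀ i : Fin m, fv σ i = fv σ' i := by
    intro i
    have hi2 : 2 * (i : ℕ) < n := by have := i.isLt; omega
    have hb := hbf (2 * (i : ℕ)) hi2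
    have hc1 := hcond σ hσ i
    have hc2 := hcond σ' hσ' i
    have hiff : ((i : ℕ) < (σ i : ℕ)) ↔ ((i : ℕ) < (σ' i : ℕ)) := by
      rw [hc1, hc2, hb]
    unfold fv
    by_cases hA : (i : ℕ) < (σ i : ℕ)
    · rw [if_pos hA, if_pos (hiff.mp hA)]
    · rw [if_neg hA, if_neg (fun hh => hA (hiff.mpr hh))]
  apply Equiv.ext
  intro i
  have hfvlt : fv σ i < n := lt_of_lt_of_le (fv_lt σ i) h1
  have hb := hbf (fv σ i) hfvlt
  rw [bF_fv, hfveq i, bF_fv, ← hfveq (σ' i)] at hb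
  exact fv_inj σ hb


lemma alt_pair {n : ℕ} (π : Equiv.Perm (Fin n)) (halt : IsAlternating π) {t : ℕ}
    (h0 : 2 * t < n) (h : 2 * t + 1 < n) :
    (π ⟨2 * t + 1, h⟩ : ℕ) < (π ⟨2 * t, h0⟩ : ℕ) := by
  have hh := halt (2 * t) h
  rw [if_pos (by omega)] at hh
  have e : (⟨2 * t, Nat.lt_of_succ_lt h⟩ : Fin n) = ⟨2 * t, h0⟩ := rfl
  rw [e] at hh
  exact hh

lemma key_surj {n : ℕ} (π : Equiv.Perm (Fin n)) (halt : IsAlternating π)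
    (hcount : fixedPointCount π = (n + 1) / 2) :
    ∀ j : ℕ, j < (n + 1) / 2 → ∃ p : Fin n, π p = p ∧ (p : ℕ) / 2 = j := by
  classical
  intro j hj
  set F := Finset.univ.filter fun i : Fin n => π i = i with hFdef
  have hmem : ∀ x : Fin n, x ∈ F ↔ π x = x := by
    intro x
    simp [hFdef]
  have hFcard : F.card = (n + 1) / 2 := hcount
  have hno_adj : ∀ x ∈ F, ∀ y ∈ F, (x : ℕ) / 2 = (y : ℕ) / 2 → x = y := by
    intro x hx y hy hxy
    rw [hmem] at hx hy
    rcases lt_trichotomy (x : ℕ) (y : ℕ) with h | h | h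
    · exfalso
      have hyb := y.isLt
      have hlt : (x : ℕ) + 1 < n := by omega
      have hh := halt (x : ℕ) hlt
      rw [if_pos (by omega)] at hh
      have e1 : (⟨(x : ℕ), Nat.lt_of_succ_lt hlt⟩ : Fin n) = x := Fin.ext rfl
      have e2 : (⟨(x : ℕ) + 1, hlt⟩ : Fin n) = y := Fin.ext (show (x:ℕ)+1 = (y:ℕ) by omega)
      rw [e1, e2, hx, hy] at hh
      have := (Fin.lt_def).mp hh
      omega
    · exact Fin.ext h
    · exfalso
      have hxb := x.isLt
      have hlt : (y : ℕ) + 1 < n := by omega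
      have hh := halt (y : ℕ) hlt
      rw [if_pos (by omega)] at hh
      have e1 : (⟨(y : ℕ), Nat.lt_of_succ_lt hlt⟩ : Fin n) = y := Fin.ext rfl
      have e2 : (⟨(y : ℕ) + 1, hlt⟩ : Fin n) = x := Fin.ext (show (y:ℕ)+1 = (x:ℕ) by omega)
      rw [e1, e2, hx, hy] at hh
      have := (Fin.lt_def).mp hh
      omega
  have hsurj := Finset.surj_on_of_inj_on_of_card_le
    (s := F) (t := (Finset.univ : Finset (Fin ((n + 1) / 2))))
    (fun x hx => (⟨(x : ℕ) / 2, by have := x.isLt; omega⟩ : Fin ((n + 1) / 2)))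
    (fun a ha => Finset.mem_univ _)
    (fun a₁ a₂ ha₁ ha₂ hcongr => hno_adj a₁ ha₁ a₂ ha₂ (by
      have := congrArg Fin.val hcongr
      exact this))
    (by rw [hFcard, Finset.card_univ, Fintype.card_fin])
  obtain ⟨p, hp, hpe⟩ := hsurj ⟨j, hj⟩ (Finset.mem_univ _)
  refine ⟨p, (hmem p).mp hp, ?_⟩
  have := congrArg Fin.val hpe
  exact this.symm


set_option maxHeartbeats 1000000 in
lemma mainPerm_surjective {m n : ℕ} (h1 : 2 * m ≤ n) (h2 : n ≤ 2 * m + 1)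
    (π : Equiv.Perm (Fin n)) (halt : IsAlternating π)
    (hcount : fixedPointCount π = (n + 1) / 2) :
    ∃ σ : Equiv.Perm (Fin m), (∀ i, σ i ≠ i) ∧ mainPerm σ h1 = π := by
  classical
  have key := key_surj π halt hcount
  have KeyP : ∀ t : ℕ, t < m → ∀ ht0 : 2 * t < n, ∀ ht1 : 2 * t + 1 < n,
      π ⟨2 * t, ht0⟩ = ⟨2 * t, ht0⟩ ∨ π ⟨2 * t + 1, ht1⟩ = ⟨2 * t + 1, ht1⟩ := by
    intro t ht ht0 ht1
    obtain ⟨p, hp, hdiv⟩ := key t (by omega)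
    have hpv := p.isLt
    rcases (show (p : ℕ) = 2 * t ∨ (p : ℕ) = 2 * t + 1 by omega) with h | h
    · left
      have e : (⟨2 * t, ht0⟩ : Fin n) = p := Fin.ext (show 2 * t = (p : ℕ) by omega)
      rw [e]; exact hp
    · right
      have e : (⟨2 * t + 1, ht1⟩ : Fin n) = p := Fin.ext (show 2 * t + 1 = (p : ℕ) by omega)
      rw [e]; exact hp
  have KeyLast : ∀ hlt : 2 * m < n, π ⟨2 * m, hlt⟩ = ⟨2 * m, hlt⟩ := by
    intro hlt
    obtain ⟨p, hp, hdiv⟩ := key m (by omega)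
    have hpv := p.isLt
    have e : (⟨2 * m, hlt⟩ : Fin n) = p := Fin.ext (show 2 * m = (p : ℕ) by omega)
    rw [e]; exact hp
  have master : ∀ t : Fin m, ∃ q : Fin n,
      ((q : ℕ) = 2 * (t : ℕ) ∨ (q : ℕ) = 2 * (t : ℕ) + 1) ∧ π q ≠ q ∧
        (π q : ℕ) < 2 * m ∧
        ((q : ℕ) = 2 * (t : ℕ) → 2 * (t : ℕ) + 1 < (π q : ℕ)) ∧
        ((q : ℕ) = 2 * (t : ℕ) + 1 → (π q : ℕ) < 2 * (t : ℕ)) := by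
    intro t
    have htm := t.isLt
    have ht1 : 2 * (t : ℕ) + 1 < n := by omega
    have ht0 : 2 * (t : ℕ) < n := by omega
    have hpr := alt_pair π halt ht0 ht1
    have hr1 : ((⟨2 * (t : ℕ), ht0⟩ : Fin n) : ℕ) = 2 * (t : ℕ) := rfl
    have hr2 : ((⟨2 * (t : ℕ) + 1, ht1⟩ : Fin n) : ℕ) = 2 * (t : ℕ) + 1 := rfl
    by_cases hfix : π ⟨2 * (t : ℕ), ht0⟩ = ⟨2 * (t : ℕ), ht0⟩
    · have hfv : (π ⟨2 * (t : ℕ), ht0⟩ : ℕ) = 2 * (t : ℕ) := congrArg Fin.val hfix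
      refine ⟨⟨2 * (t : ℕ) + 1, ht1⟩, Or.inr rfl, ?_, by omega, fun hc => by omega,
        fun _ => by omega⟩
      intro hq
      have := congrArg Fin.val hq
      omega
    · have hfix' : π ⟨2 * (t : ℕ) + 1, ht1⟩ = ⟨2 * (t : ℕ) + 1, ht1⟩ :=
        (KeyP (t : ℕ) htm ht0 ht1).resolve_left hfix
      have hfv : (π ⟨2 * (t : ℕ) + 1, ht1⟩ : ℕ) = 2 * (t : ℕ) + 1 := congrArg Fin.val hfix'
      have hvlt : (π ⟨2 * (t : ℕ), ht0⟩ : ℕ) < 2 * m := by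
        have hlt := (π ⟨2 * (t : ℕ), ht0⟩).isLt
        rcases lt_or_ge (π ⟨2 * (t : ℕ), ht0⟩ : ℕ) (2 * m) with h | h
        · exact h
        · exfalso
          have h2m : 2 * m < n := by omega
          have hl := KeyLast h2m
          have e : π ⟨2 * (t : ℕ), ht0⟩ = ⟨2 * m, h2m⟩ :=
            Fin.ext (show (π ⟨2 * (t : ℕ), ht0⟩ : ℕ) = 2 * m by omega)
          have := congrArg Fin.val (π.injective (e.trans hl.symm))
          omega
      exact ⟨⟨2 * (t : ℕ), ht0⟩, Or.inl rfl, hfix, hvlt, fun _ => by omega, fun hc => by omega⟩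
  choose q hq1 hq2 hq3 hq4 hq5 using master
  have hvlt : ∀ t : Fin m, (π (q t) : ℕ) / 2 < m := fun t => by have := hq3 t; omega
  have hvne : ∀ (t : Fin m) (p : Fin n), π p = p → (π (q t) : ℕ) ≠ (p : ℕ) := by
    intro t p hp h
    have h' : π (q t) = p := Fin.ext h
    have h'' : q t = p := π.injective (h'.trans hp.symm)
    exact hq2 t (by rw [h'']; exact hp)
  have hqne : ∀ (t : Fin m) (p : Fin n), π p = p → (q t : ℕ) ≠ (p : ℕ) := by
    intro t p hp h
    have h' : q t = p := Fin.ext h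
    exact hq2 t (by rw [h']; exact hp)
  set τ0 : Fin m → Fin m := fun t => ⟨(π (q t) : ℕ) / 2, hvlt t⟩ with hτ0
  have hinj : Function.Injective τ0 := by
    intro t t' h
    have hval : (π (q t) : ℕ) / 2 = (π (q t') : ℕ) / 2 := congrArg Fin.val h
    obtain ⟨p, hp, hpd⟩ := key ((π (q t) : ℕ) / 2) (by have := hvlt t; omega)
    have h1' := hvne t p hp
    have h2' := hvne t' p hp
    have hveq : (π (q t) : ℕ) = (π (q t') : ℕ) := by omega
    have hqq : q t = q t' := π.injective (Fin.ext hveq)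
    have hqv : (q t : ℕ) = (q t' : ℕ) := congrArg Fin.val hqq
    have h3' := hq1 t
    have h4' := hq1 t'
    exact Fin.ext (by omega)
  set τ : Equiv.Perm (Fin m) := Equiv.ofBijective τ0 ((Finite.injective_iff_bijective).mp hinj)
    with hτdef
  have hτ0app : ∀ t : Fin m, (τ t : ℕ) = (π (q t) : ℕ) / 2 := fun t => rfl
  have hτ : ∀ i, τ i ≠ i := by
    intro i hio
    have hval : (τ i : ℕ) = (i : ℕ) := congrArg Fin.val hio
    rw [hτ0app] at hval
    rcases hq1 i with hA | hB
    · have := hq4 i hA; omega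
    · have := hq5 i hB; omega
  refine ⟨τ, hτ, ?_⟩
  have hfvq : ∀ t : Fin m, fv τ t = (q t : ℕ) := by
    intro t
    have ht := hτ0app t
    unfold fv
    rcases hq1 t with hA | hB
    · have := hq4 t hA
      rw [if_pos (show (t : ℕ) < (τ t : ℕ) by omega)]
      omega
    · have := hq5 t hB
      rw [if_neg (show ¬ (t : ℕ) < (τ t : ℕ) by omega)]
      omega
  apply Equiv.ext
  intro k
  apply Fin.ext
  rw [mainPerm_apply]
  have hka := k.isLt
  by_cases ha2 : (k : ℕ) / 2 < m
  · set t : Fin m := ⟨(k : ℕ) / 2, ha2⟩ with htd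
    have htv : (t : ℕ) = (k : ℕ) / 2 := rfl
    by_cases haq : (k : ℕ) = (q t : ℕ)
    · have hfva : fv τ t = (k : ℕ) := by rw [hfvq]; omega
      have hb : bF τ (k : ℕ) = fv τ (τ t) := by rw [← hfva, bF_fv]
      rw [hb, hfvq (τ t)]
      have hkq : k = q t := Fin.ext haq
      rw [hkq]
      have hτt := hτ0app t
      obtain ⟨p, hp, hpd⟩ := key ((π (q t) : ℕ) / 2) (by have := hvlt t; omega)
      have h1' := hvne t p hp
      have h2' := hqne (τ t) p hp
      have h3' := hq1 (τ t)
      omega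
    · have hnb : bF τ (k : ℕ) = (k : ℕ) := by
        apply bF_of_not_free
        intro j' hj'
        have hd := fv_div τ j'
        rw [hfvq j'] at hj' hd
        have hj't : j' = t := Fin.ext (show (j' : ℕ) = (t : ℕ) by omega)
        rw [hj't] at hj'
        exact haq hj'.symm
      rw [hnb]
      obtain ⟨p, hp, hpd⟩ := key ((k : ℕ) / 2) (by omega)
      have h2' := hqne t p hp
      have h3' := hq1 t
      have hap : k = p := Fin.ext (show (k : ℕ) = (p : ℕ) by omega)
      rw [hap, hp]
  · have hnb : bF τ (k : ℕ) = (k : ℕ) := by unfold bF; rw [dif_neg (by omega)]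
    rw [hnb]
    have hl := KeyLast (show 2 * m < n by omega)
    have hk2m : k = ⟨2 * m, by omega⟩ := Fin.ext (show (k : ℕ) = 2 * m by omega)
    rw [hk2m, hl]

end StanleyAux

open StanleyAux in
/-- For every integer `n ≥ 4`, the number of alternating permutations of `[n]` with exactly
`⌈n/2⌉` fixed points equals `D_{⌊n/2⌋}`, the number of derangements of `[⌊n/2⌋]`. -/
theorem stanley_conjecture_alternating (n : ℕ) (hn : 4 ≤ n) :
    Nat.card {π : Equiv.Perm (Fin n) // IsAlternating π ∧ fixedPointCount π = (n + 1) / 2} =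
      numDerangements (n / 2) := by
  classical
  set m := n / 2 with hm
  have h1 : 2 * m ≤ n := by omega
  have h2 : n ≤ 2 * m + 1 := by omega
  have hbij : Function.Bijective
      (fun σp : {σ : Equiv.Perm (Fin m) // ∀ i, σ i ≠ i} =>
        (⟨mainPerm σp.1 h1, mainPerm_alternating σp.1 σp.2 h1 h2, by
            rw [mainPerm_count σp.1 σp.2 h1]; omega⟩ :
          {π : Equiv.Perm (Fin n) // IsAlternating π ∧ fixedPointCount π = (n + 1) / 2})) := by
    constructor
    · intro a b hab
      exact Subtype.ext (mainPerm_injective a.1 b.1 a.2 b.2 h1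
        (congrArg Subtype.val hab))
    · intro πp
      obtain ⟨σ, hσ, hs⟩ := mainPerm_surjective h1 h2 πp.1 πp.2.1 πp.2.2
      exact ⟨⟨σ, hσ⟩, Subtype.ext hs⟩
  rw [← Nat.card_eq_of_bijective _ hbij]
  calc Nat.card {σ : Equiv.Perm (Fin m) // ∀ i, σ i ≠ i}
      = Nat.card (derangements (Fin m)) :=
        Nat.card_congr (Equiv.subtypeEquivRight fun f => Iff.rfl)
    _ = numDerangements m := by
        rw [Nat.card_eq_fintype_card, card_derangements_fin_eq_numDerangements]
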